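/- arXiv:1601.04312 — 2 statements merged into one kernel-verified Lean document; each statement's English description precedes it below -/
import Mathlib

section
/- Let {K_i} be a family of convex bodies in ℝⁿ forming a k-fold tiling of a connected set D (each point of D not on the boundary of any K_i belongs to exactly k bodies of the family, counted with multiplicity). Then for every index i and every point q ∈ ∂K_i that is an interior point of D, there exists an index j with q ∈ ∂K_j and int(K_i) ∩ int(K_j) = ∅. -/
/-- A convex body in ℝⁿ: a compact convex set with nonempty interior. -/
def IsConvexBody {n : ℕ} (K : Set (EuclideanSpace ℝ (Fin n))) : Prop :=
  IsCompact K ∧ Convex ℝ K ∧ (interior K).Nonempty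

/-- A (locally finite) family `K i` is a `k`-fold tiling of `D`: every point of `D`
not lying on the boundary of any member lies in exactly `k` members (with multiplicity). -/
def IsKFoldTilingOf {n : ℕ} {ι : Type*} (K : ι → Set (EuclideanSpace ℝ (Fin n)))
    (D : Set (EuclideanSpace ℝ (Fin n))) (k : ℕ) : Prop :=
  (∀ B : Set (EuclideanSpace ℝ (Fin n)), Bornology.IsBounded B →
      {i | (K i ∩ B).Nonempty}.Finite) ∧
  ∀ p ∈ D, (∀ i, p ∉ frontier (K i)) → {i | p ∈ K i}.encard = k

/-!
Near `q` only finitely many bodies matter, and blowing up at `q` replaces each body with `q` on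
its boundary by its tangent cone there: generic points are still covered a fixed number of times,
the bodies with `q` in their interior having become the whole space and being discounted. So it
suffices to show that if finitely many closed convex cones with apex on their boundary cover
generic points equally often, every cone `T i` has a partner with disjoint interior. This goes by
induction on the codimension of a subspace `L` contained in all the cones: blowing up again at a
boundary point of `T i` outside `L` adds that point to `L`. When `L` is a hyperplane, each cone is
one of its two half-spaces, and a generic point on the side opposite to `T i` lies in a cone that
is the opposite half-space.
-/

open Set Filter Topology Module

section GenericMultiplicity

variable {ι X : Type*} [TopologicalSpace X]

def HasGenericMultiplicity (F : Set ι) (T : ι → Set X) (l : Filter X) (c : ℕ) : Prop :=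
  ∀ᶠ z in l, (∀ j ∈ F, z ∉ frontier (T j)) → {j ∈ F | z ∈ T j}.ncard = c

variable {F : Set ι} {T : ι → Set X} {c : ℕ}

theorem dense_setOf_forall_notMem_frontier (hF : F.Finite) (hT : ∀ j ∈ F, IsClosed (T j)) :
    Dense {z | ∀ j ∈ F, z ∉ frontier (T j)} := by
  have h : {z | ∀ j ∈ F, z ∉ frontier (T j)} = ⋂₀ ((fun j => (frontier (T j))ᶜ) '' F) := by
    ext; simp
  rw [h]
  refine (hF.image _).dense_sInter ?_ ?_ <;> rintro _ ⟨j, hj, rfl⟩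
  · exact isClosed_frontier.isOpen_compl
  · exact interior_eq_empty_iff_dense_compl.1 (interior_frontier (hT j hj))

theorem HasGenericMultiplicity.one_le (h : HasGenericMultiplicity F T ⊤ c) (hF : F.Finite)
    (hT : ∀ j ∈ F, IsClosed (T j)) {i : ι} (hi : i ∈ F) (hTi : (interior (T i)).Nonempty) :
    1 ≤ c := by
  obtain ⟨z, hz, hzi⟩ :=
    (dense_setOf_forall_notMem_frontier hF hT).exists_mem_open isOpen_interior hTi
  rw [← eventually_top.1 h z hz, Nat.one_le_iff_ne_zero, ← pos_iff_ne_zero,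
    ncard_pos (hF.subset (sep_subset _ _))]
  exact ⟨i, hi, interior_subset hzi⟩

theorem HasGenericMultiplicity.exists_mem (h : HasGenericMultiplicity F T ⊤ c) (hF : F.Finite)
    (hT : ∀ j ∈ F, IsClosed (T j)) (hc : 1 ≤ c) {U : Set X} (hU : IsOpen U)
    (hUne : U.Nonempty) : ∃ z ∈ U, ∃ j ∈ F, z ∈ T j := by
  obtain ⟨z, hz, hzU⟩ := (dense_setOf_forall_notMem_frontier hF hT).exists_mem_open hU hUne
  obtain ⟨j, hj⟩ := nonempty_of_ncard_ne_zero (s := {j ∈ F | z ∈ T j})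
    (by rw [eventually_top.1 h z hz]; omega)
  exact ⟨z, hzU, j, hj⟩

end GenericMultiplicity

section TangentCone

variable {E : Type*} [NormedAddCommGroup E] [NormedSpace ℝ E] {C : Set E} {p u : E}

def openTangentCone (C : Set E) (p : E) : Set E :=
  {u | ∃ t : ℝ, 0 < t ∧ p + t • u ∈ interior C}

theorem tendsto_add_smul_nhdsGT (p u : E) :
    Tendsto (fun t : ℝ => p + t • u) (𝓝[>] 0) (𝓝 p) :=
  ((continuous_const.add (continuous_id.smul continuous_const)).tendsto' 0 p
    (by simp)).mono_left nhdsWithin_le_nhds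

theorem isOpen_openTangentCone : IsOpen (openTangentCone C p) := by
  have h : openTangentCone C p = ⋃ t ∈ Ioi (0 : ℝ), (fun u => p + t • u) ⁻¹' interior C := by
    ext; simp [openTangentCone]
  rw [h]
  exact isOpen_biUnion fun t _ =>
    isOpen_interior.preimage (continuous_const.add (continuous_const_smul t))

theorem sub_mem_openTangentCone {z : E} (hz : z ∈ interior C) : z - p ∈ openTangentCone C p :=
  ⟨1, one_pos, by rwa [one_smul, add_sub_cancel]⟩

theorem openTangentCone_nonempty (hint : (interior C).Nonempty) :
    (openTangentCone C p).Nonempty :=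
  hint.elim fun _ hz => ⟨_, sub_mem_openTangentCone hz⟩

theorem smul_mem_openTangentCone {c : ℝ} (hc : 0 < c) (hu : u ∈ openTangentCone C p) :
    c • u ∈ openTangentCone C p := by
  obtain ⟨t, ht, hmem⟩ := hu
  exact ⟨t / c, div_pos ht hc, by rwa [smul_smul, div_mul_cancel₀ _ hc.ne']⟩

theorem Convex.add_smul_mem_interior_of_le (hC : Convex ℝ C) (hp : p ∈ C) {s t : ℝ}
    (hs : 0 < s) (hst : s ≤ t) (h : p + t • u ∈ interior C) : p + s • u ∈ interior C := by
  have ht : 0 < t := hs.trans_le hst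
  simpa [smul_smul, div_mul_cancel₀ _ ht.ne'] using
    hC.add_smul_mem_interior hp h (t := s / t) ⟨div_pos hs ht, (div_le_one ht).2 hst⟩

theorem Convex.eventually_add_smul_mem_interior (hC : Convex ℝ C) (hp : p ∈ C)
    (hu : u ∈ openTangentCone C p) : ∀ᶠ t in 𝓝[>] (0 : ℝ), p + t • u ∈ interior C := by
  obtain ⟨t₀, ht₀, hmem⟩ := hu
  filter_upwards [Ioc_mem_nhdsGT ht₀] with t ht
  exact hC.add_smul_mem_interior_of_le hp ht.1 ht.2 hmem

theorem convex_openTangentCone (hC : Convex ℝ C) (hp : p ∈ C) :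
    Convex ℝ (openTangentCone C p) := by
  rintro u ⟨s, hs, hu⟩ v ⟨t, ht, hv⟩ a b ha hb hab
  have hr : 0 < min s t := lt_min hs ht
  refine ⟨min s t, hr, ?_⟩
  convert hC.interior (hC.add_smul_mem_interior_of_le hp hr (min_le_left _ _) hu)
    (hC.add_smul_mem_interior_of_le hp hr (min_le_right _ _) hv) ha hb hab using 1
  rw [← sub_eq_of_eq_add' hab.symm]
  module

theorem Convex.mem_closure_openTangentCone (hC : Convex ℝ C) (hint : (interior C).Nonempty)
    {t : ℝ} (ht : 0 < t) (h : p + t • u ∈ C) : u ∈ closure (openTangentCone C p) := by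
  have hmaps : MapsTo (fun v => t⁻¹ • (v - p)) (interior C) (openTangentCone C p) :=
    fun v hv => ⟨t, ht, by simpa [smul_smul, ht.ne'] using hv⟩
  have hmem : p + t • u ∈ closure (interior C) := by
    rw [hC.closure_interior_eq_closure_of_nonempty_interior hint]
    exact subset_closure h
  simpa [smul_smul, ht.ne'] using
    hmaps.closure ((continuous_id.sub continuous_const).const_smul _) hmem

theorem Convex.interior_closure_openTangentCone (hC : Convex ℝ C) (hp : p ∈ C)
    (hint : (interior C).Nonempty) :
    interior (closure (openTangentCone C p)) = openTangentCone C p := by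
  have hO : IsOpen (openTangentCone C p) := isOpen_openTangentCone
  rw [(convex_openTangentCone hC hp).interior_closure_eq_interior_of_nonempty_interior
    (hO.interior_eq.symm ▸ openTangentCone_nonempty hint), hO.interior_eq]

theorem Disjoint.interior_of_tangentCone {C' : Set E}
    (h : Disjoint (interior (closure (openTangentCone C p)))
      (interior (closure (openTangentCone C' p)))) :
    Disjoint (interior C) (interior C') := by
  have hsub : ∀ {C : Set E}, interior C ⊆
      (· - p) ⁻¹' interior (closure (openTangentCone C p)) := fun hz =>
    interior_maximal subset_closure isOpen_openTangentCone (sub_mem_openTangentCone hz)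
  exact (h.preimage _).mono hsub hsub

theorem eventually_add_smul_mem_iff (hcl : IsClosed C) (hC : Convex ℝ C)
    (hint : (interior C).Nonempty)
    (hu : p ∈ frontier C → u ∉ frontier (closure (openTangentCone C p))) :
    ∀ᶠ t in 𝓝[>] (0 : ℝ), p + t • u ∉ frontier C ∧
      (p + t • u ∈ C ↔
        p ∈ interior C ∨ p ∈ frontier C ∧ u ∈ closure (openTangentCone C p)) := by
  classical
  set P := p ∈ interior C ∨ p ∈ frontier C ∧ u ∈ closure (openTangentCone C p)
  suffices h : ∀ᶠ t in 𝓝[>] (0 : ℝ), if P then p + t • u ∈ interior C else p + t • u ∉ C by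
    filter_upwards [h] with t ht
    split_ifs at ht with hP
    · exact ⟨disjoint_left.1 disjoint_interior_frontier ht, iff_of_true (interior_subset ht) hP⟩
    · exact ⟨fun hfr => ht (hcl.frontier_subset hfr), iff_of_false ht hP⟩
  by_cases hP : P
  · simp only [hP, if_true]
    rcases hP with hpi | ⟨hpf, hut⟩
    · exact tendsto_add_smul_nhdsGT p u |>.eventually (isOpen_interior.mem_nhds hpi)
    · have hpC : p ∈ C := hcl.frontier_subset hpf
      refine hC.eventually_add_smul_mem_interior hpC ?_
      rw [← hC.interior_closure_openTangentCone hpC hint]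
      by_contra hui
      exact hu hpf ⟨subset_closure hut, hui⟩
  · simp only [hP, if_false]
    by_cases hpC : p ∈ C
    · have hpf : p ∈ frontier C := by
        rw [hcl.frontier_eq]; exact ⟨hpC, fun h => hP (Or.inl h)⟩
      filter_upwards [self_mem_nhdsWithin] with t (ht : 0 < t) hmem
      exact hP (Or.inr ⟨hpf, hC.mem_closure_openTangentCone hint ht hmem⟩)
    · exact tendsto_add_smul_nhdsGT p u |>.eventually (hcl.isOpen_compl.mem_nhds hpC)

theorem HasGenericMultiplicity.tangentCone {ι : Type*} {F : Set ι} (hF : F.Finite)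
    {T : ι → Set E} (hcl : ∀ j ∈ F, IsClosed (T j)) (hconv : ∀ j ∈ F, Convex ℝ (T j))
    (hint : ∀ j ∈ F, (interior (T j)).Nonempty) {c : ℕ}
    (h : HasGenericMultiplicity F T (𝓝 p) c) :
    HasGenericMultiplicity {j ∈ F | p ∈ frontier (T j)}
      (fun j => closure (openTangentCone (T j) p)) ⊤
      (c - {j ∈ F | p ∈ interior (T j)}.ncard) := by
  refine eventually_top.2 fun u hu => ?_
  have hray := (eventually_all_finite hF).2 fun j hj =>
    eventually_add_smul_mem_iff (u := u) (hcl j hj) (hconv j hj) (hint j hj)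
      fun hp => hu j ⟨hj, hp⟩
  obtain ⟨t, ht, hcount⟩ := (hray.and ((tendsto_add_smul_nhdsGT p u).eventually h)).exists
  have hsplit : {j ∈ F | p + t • u ∈ T j} = {j ∈ F | p ∈ interior (T j)} ∪
      {j ∈ {j ∈ F | p ∈ frontier (T j)} | u ∈ closure (openTangentCone (T j) p)} := by
    ext j
    simp only [mem_sep_iff, mem_union]
    constructor
    · rintro ⟨hj, hmem⟩
      rcases ((ht j hj).2.1 hmem) with h | h
      exacts [Or.inl ⟨hj, h⟩, Or.inr ⟨⟨hj, h.1⟩, h.2⟩]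
    · rintro (⟨hj, h⟩ | ⟨⟨hj, h⟩, h'⟩)
      exacts [⟨hj, (ht j hj).2.2 (Or.inl h)⟩, ⟨hj, (ht j hj).2.2 (Or.inr ⟨h, h'⟩)⟩]
  have hdisj : Disjoint {j ∈ F | p ∈ interior (T j)}
      {j ∈ {j ∈ F | p ∈ frontier (T j)} | u ∈ closure (openTangentCone (T j) p)} :=
    disjoint_left.2 fun j hi hf => disjoint_left.1 disjoint_interior_frontier hi.2 hf.1.2
  have := hcount fun j hj => (ht j hj).1
  rw [hsplit, ncard_union_eq hdisj (hF.subset (sep_subset _ _))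
    ((hF.subset (sep_subset _ _)).subset (sep_subset _ _))] at this
  dsimp only
  omega

end TangentCone

theorem Submodule.exists_ker_le_of_finrank_le_succ {K V : Type*} [Field K] [LinearOrder K]
    [IsStrictOrderedRing K] [AddCommGroup V] [Module K V] [FiniteDimensional K V]
    {L : Submodule K V} (hL : finrank K V ≤ finrank K L + 1) {x : V} (hx : x ∉ L) :
    ∃ f : V →ₗ[K] K, LinearMap.ker f ≤ L ∧ 0 < f x := by
  obtain ⟨g, hg, hLg⟩ := L.exists_le_ker_of_lt_top (lt_top_iff_ne_top.2 fun h => hx (h ▸ trivial))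
  have hker : LinearMap.ker g = L := by
    refine (Submodule.eq_of_le_of_finrank_le hLg ?_).symm
    have := Submodule.finrank_lt (s := LinearMap.ker g) (LinearMap.ker_eq_top.not.2 hg)
    omega
  have hgx : g x ≠ 0 := fun h => hx (hker ▸ h)
  refine ⟨g x • g, by rw [LinearMap.ker_smul _ _ hgx, hker], ?_⟩
  simpa using mul_self_pos.2 hgx

theorem IsPreconnected.inter_frontier_nonempty {X : Type*} [TopologicalSpace X] {S A : Set X}
    (hS : IsPreconnected S) (hin : (S ∩ interior A).Nonempty)
    (hout : (S \ closure A).Nonempty) : (S ∩ frontier A).Nonempty := by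
  by_contra h
  have hcover : S ⊆ interior A ∪ (closure A)ᶜ := fun x hx => by
    by_contra hx'
    simp only [mem_union, mem_compl_iff, not_or, not_not] at hx'
    exact h ⟨x, hx, hx'.2, hx'.1⟩
  obtain ⟨x, -, hxi, hxc⟩ := hS _ _ isOpen_interior isClosed_closure.isOpen_compl hcover hin hout
  exact hxc (interior_subset.trans subset_closure hxi)

theorem Submodule.dense_compl {E : Type*} [NormedAddCommGroup E] [NormedSpace ℝ E]
    {L : Submodule ℝ E} (hL : L ≠ ⊤) : Dense (L : Set E)ᶜ :=
  interior_eq_empty_iff_dense_compl.1 <| not_nonempty_iff_eq_empty.1 fun h =>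
    hL (L.eq_top_of_nonempty_interior' h)

section SolidCone

variable {E : Type*} [NormedAddCommGroup E] [NormedSpace ℝ E]

structure IsSolidCone (L : Submodule ℝ E) (T : Set E) : Prop where
  isClosed : IsClosed T
  convex : Convex ℝ T
  smul_mem : ∀ ⦃c : ℝ⦄, 0 < c → ∀ ⦃u⦄, u ∈ T → c • u ∈ T
  interior_nonempty : (interior T).Nonempty
  zero_mem_frontier : (0 : E) ∈ frontier T
  submodule_subset : (L : Set E) ⊆ T

variable {L : Submodule ℝ E} {T : Set E}

theorem isSolidCone_closure_openTangentCone {C : Set E} {p : E} (hcl : IsClosed C)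
    (hC : Convex ℝ C) (hint : (interior C).Nonempty) (hp : p ∈ frontier C) :
    IsSolidCone ⊥ (closure (openTangentCone C p)) := by
  have hpC : p ∈ C := hcl.frontier_subset hp
  have h0 : (0 : E) ∈ closure (openTangentCone C p) :=
    hC.mem_closure_openTangentCone hint one_pos (by simpa using hpC)
  have hinterior := hC.interior_closure_openTangentCone hpC hint
  refine ⟨isClosed_closure, (convex_openTangentCone hC hpC).closure, fun c hc u hu => ?_,
    hinterior.symm ▸ openTangentCone_nonempty hint, ⟨subset_closure h0, ?_⟩, by simpa using h0⟩
  · exact MapsTo.closure (fun v hv => smul_mem_openTangentCone hc hv)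
      (continuous_const_smul c) hu
  · rw [hinterior]
    rintro ⟨t, -, ht⟩
    exact disjoint_left.1 disjoint_interior_frontier (by simpa using ht) hp

namespace IsSolidCone

theorem add_mem (hT : IsSolidCone L T) {a b : E} (ha : a ∈ T) (hb : b ∈ T) : a + b ∈ T := by
  convert hT.smul_mem two_pos
    (hT.convex ha hb one_half_pos.le one_half_pos.le (add_halves 1)) using 1
  module

theorem ne_univ (hT : IsSolidCone L T) : T ≠ univ := fun h => by
  simpa [h] using hT.zero_mem_frontier

theorem submodule_ne_top (hT : IsSolidCone L T) : L ≠ ⊤ := fun h =>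
  hT.ne_univ (univ_subset_iff.1 (by simpa [h] using hT.submodule_subset))

theorem setOf_nonneg_subset (hT : IsSolidCone L T) {f : E →ₗ[ℝ] ℝ} (hf : LinearMap.ker f ≤ L)
    {x : E} (hx : x ∈ T) (hfx : 0 < f x) : {y | 0 ≤ f y} ⊆ T := by
  intro y (hy : 0 ≤ f y)
  rcases hy.eq_or_lt with hy | hy
  · exact hT.submodule_subset (hf hy.symm)
  · have hr : 0 < f y / f x := div_pos hy hfx
    have hker : y - (f y / f x) • x ∈ L := hf <| by
      simp [div_mul_cancel₀ _ hfx.ne']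
    simpa using hT.add_mem (hT.submodule_subset hker) (hT.smul_mem hr hx)

theorem subset_setOf_nonneg (hT : IsSolidCone L T) {f : E →ₗ[ℝ] ℝ} (hf : LinearMap.ker f ≤ L)
    {x : E} (hx : x ∈ T) (hfx : 0 < f x) : T ⊆ {y | 0 ≤ f y} := by
  intro y hy
  by_contra! hfy
  refine hT.ne_univ (eq_univ_of_forall fun z => ?_)
  rcases le_total 0 (f z) with hz | hz
  · exact hT.setOf_nonneg_subset hf hx hfx hz
  · exact hT.setOf_nonneg_subset (f := -f) (by rwa [LinearMap.ker_neg]) hy (by simpa using hfy)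
      (by simpa using hz)

theorem tangentCone (hT : IsSolidCone L T) {u : E} (hu : u ∈ frontier T) :
    IsSolidCone (L ⊔ ℝ ∙ u) (closure (openTangentCone T u)) := by
  refine { isSolidCone_closure_openTangentCone hT.isClosed hT.convex hT.interior_nonempty hu with
    submodule_subset := fun v hv => ?_ }
  obtain ⟨l, hl, _, hy, rfl⟩ := Submodule.mem_sup.1 hv
  obtain ⟨a, rfl⟩ := Submodule.mem_span_singleton.1 hy
  set t : ℝ := 1 / (|a| + 1)
  have ht : 0 < t := by positivity
  have hta : 0 < 1 + t * a := by
    have : t * |a| < 1 := by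
      rw [div_mul_eq_mul_div, one_mul, div_lt_one (by positivity)]; linarith
    nlinarith [neg_abs_le a]
  refine hT.convex.mem_closure_openTangentCone hT.interior_nonempty ht ?_
  convert hT.add_mem (hT.smul_mem hta (hT.isClosed.frontier_subset hu))
    (hT.submodule_subset (L.smul_mem t hl)) using 1
  module

theorem exists_mem_interior_notMem (hT : IsSolidCone L T) : ∃ x ∈ interior T, x ∉ L :=
  let ⟨x, hxL, hxT⟩ := (Submodule.dense_compl hT.submodule_ne_top).exists_mem_open
    isOpen_interior hT.interior_nonempty
  ⟨x, hxT, hxL⟩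

theorem exists_mem_frontier_notMem [FiniteDimensional ℝ E] (hT : IsSolidCone L T)
    (hL : finrank ℝ L + 2 ≤ finrank ℝ E) : ∃ u ∈ frontier T, u ∉ L := by
  obtain ⟨x, hxT, hxL⟩ := hT.exists_mem_interior_notMem
  have hP : L ⊔ ℝ ∙ x ≠ ⊤ := by
    intro h
    have := Submodule.finrank_add_le_finrank_add_finrank L (ℝ ∙ x)
    rw [h, finrank_top, finrank_span_singleton (by rintro rfl; exact hxL L.zero_mem)] at this
    omega
  obtain ⟨y, hyP, hyT⟩ := (Submodule.dense_compl hP).exists_mem_open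
    hT.isClosed.isOpen_compl (nonempty_compl.2 hT.ne_univ)
  obtain ⟨u, ⟨a, b, ha, hb, hab, rfl⟩, hu⟩ :=
    (convex_segment x y).isPreconnected.inter_frontier_nonempty
      ⟨x, left_mem_segment ℝ x y, hxT⟩
      ⟨y, right_mem_segment ℝ x y, hT.isClosed.closure_eq.symm ▸ hyT⟩
  refine ⟨_, hu, fun huL => hyP ?_⟩
  have hb0 : b ≠ 0 := by
    rintro rfl
    rw [add_zero] at hab
    simp only [hab, one_smul, zero_smul, add_zero] at hu
    exact disjoint_left.1 disjoint_interior_frontier hxT hu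
  have : y = b⁻¹ • (a • x + b • y) + (-(b⁻¹ * a)) • x := by
    rw [smul_add, smul_smul, smul_smul, inv_mul_cancel₀ hb0, one_smul, neg_smul]; abel
  rw [this]
  exact Submodule.add_mem _ (Submodule.smul_mem _ _ (Submodule.mem_sup_left huL))
    (Submodule.smul_mem _ _ (Submodule.mem_sup_right (Submodule.mem_span_singleton_self x)))

end IsSolidCone

end SolidCone

section ConeLemma

variable {ι E : Type*} [NormedAddCommGroup E] [NormedSpace ℝ E] [FiniteDimensional ℝ E]
  {F : Set ι} {T : ι → Set E} {L : Submodule ℝ E} {c : ℕ} {i : ι}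

theorem exists_disjoint_interior_of_finrank_le_succ (hF : F.Finite)
    (hT : ∀ j ∈ F, IsSolidCone L (T j)) (hL : finrank ℝ E ≤ finrank ℝ L + 1)
    (hc : HasGenericMultiplicity F T ⊤ c) (hi : i ∈ F) :
    ∃ j ∈ F, Disjoint (interior (T i)) (interior (T j)) := by
  have hcl : ∀ j ∈ F, IsClosed (T j) := fun j hj => (hT j hj).isClosed
  obtain ⟨x, hxT, hxL⟩ := (hT i hi).exists_mem_interior_notMem
  obtain ⟨f, hf, hfx⟩ := L.exists_ker_le_of_finrank_le_succ hL hxL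
  obtain ⟨w, hw, j, hj, hwT⟩ := hc.exists_mem hF hcl
    (hc.one_le hF hcl hi (hT i hi).interior_nonempty)
    (isOpen_lt (LinearMap.continuous_of_finiteDimensional f) continuous_const)
    ⟨-x, show f (-x) < 0 by simpa using hfx⟩
  have hTi := (hT i hi).subset_setOf_nonneg hf (interior_subset hxT) hfx
  have hTj := (hT j hj).subset_setOf_nonneg (f := -f) (by rwa [LinearMap.ker_neg]) hwT
    (by simpa using hw)
  refine ⟨j, hj, disjoint_iff_inter_eq_empty.2 ?_⟩
  rw [← interior_inter, ← not_nonempty_iff_eq_empty]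
  refine fun h => (hT i hi).submodule_ne_top
    (L.eq_top_of_nonempty_interior' (h.mono (interior_mono fun y hy => hf ?_)))
  exact le_antisymm (by simpa using hTj hy.2) (hTi hy.1)

theorem exists_disjoint_interior_of_hasGenericMultiplicity (m : ℕ)
    (hL : finrank ℝ E ≤ finrank ℝ L + m) (hF : F.Finite) (hT : ∀ j ∈ F, IsSolidCone L (T j))
    (hc : HasGenericMultiplicity F T ⊤ c) (hi : i ∈ F) :
    ∃ j ∈ F, Disjoint (interior (T i)) (interior (T j)) := by
  induction m generalizing L F T c with
  | zero => exact exists_disjoint_interior_of_finrank_le_succ hF hT (by omega) hc hi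
  | succ m ih =>
    by_cases hL1 : finrank ℝ E ≤ finrank ℝ L + 1
    · exact exists_disjoint_interior_of_finrank_le_succ hF hT hL1 hc hi
    obtain ⟨u, hu, huL⟩ := (hT i hi).exists_mem_frontier_notMem (by omega)
    have hLu : finrank ℝ E ≤ finrank ℝ ↥(L ⊔ ℝ ∙ u) + m := by
      have := Submodule.finrank_lt_finrank_of_lt
        (left_lt_sup.2 fun h : ℝ ∙ u ≤ L => huL (h (Submodule.mem_span_singleton_self u)))
      omega
    obtain ⟨j, hj, hdisj⟩ := ih hLu (hF.subset (sep_subset _ _))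
      (fun j hj => (hT j hj.1).tangentCone hj.2)
      (HasGenericMultiplicity.tangentCone hF (fun j hj => (hT j hj).isClosed)
        (fun j hj => (hT j hj).convex) (fun j hj => (hT j hj).interior_nonempty)
        (hc.filter_mono le_top)) ⟨hi, hu⟩
    exact ⟨j, hj.1, hdisj.interior_of_tangentCone⟩

end ConeLemma

theorem IsKFoldTilingOf.hasGenericMultiplicity {n : ℕ} {ι : Type*}
    {K : ι → Set (EuclideanSpace ℝ (Fin n))} {D : Set (EuclideanSpace ℝ (Fin n))} {k : ℕ}
    (htile : IsKFoldTilingOf K D k) {q : EuclideanSpace ℝ (Fin n)} (hq : q ∈ interior D) :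
    HasGenericMultiplicity {j | (K j ∩ Metric.ball q 1).Nonempty} K (𝓝 q) k := by
  filter_upwards [mem_interior_iff_mem_nhds.1 hq, Metric.ball_mem_nhds q one_pos]
    with z hzD hzq hz
  have hnear : ∀ j, z ∈ closure (K j) → (K j ∩ Metric.ball q 1).Nonempty := fun j h =>
    inter_comm (K j) _ ▸ mem_closure_iff.1 h _ Metric.isOpen_ball hzq
  have hset : {j | (K j ∩ Metric.ball q 1).Nonempty ∧ z ∈ K j} = {j | z ∈ K j} :=
    Set.ext fun j => ⟨And.right, fun h => ⟨hnear j (subset_closure h), h⟩⟩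
  rw [hset, ncard_def,
    htile.2 z hzD fun j h => hz j (hnear j (frontier_subset_closure h)) h]
  rfl

theorem stmt_3_general {n : ℕ} {ι : Type*} (K : ι → Set (EuclideanSpace ℝ (Fin n)))
    (D : Set (EuclideanSpace ℝ (Fin n)))
    (hbody : ∀ i, IsConvexBody (K i)) (k : ℕ)
    (htile : IsKFoldTilingOf K D k) :
    ∀ i, ∀ q ∈ frontier (K i), q ∈ interior D →
      ∃ j, q ∈ frontier (K j) ∧ interior (K i) ∩ interior (K j) = ∅ := by
  intro i q hqi hqD
  have hcl : ∀ j, IsClosed (K j) := fun j => (hbody j).1.isClosed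
  have hS : {j | (K j ∩ Metric.ball q 1).Nonempty}.Finite := htile.1 _ Metric.isBounded_ball
  have hiS : (K i ∩ Metric.ball q 1).Nonempty :=
    ⟨q, (hcl i).frontier_subset hqi, Metric.mem_ball_self one_pos⟩
  obtain ⟨j, ⟨-, hqj⟩, hdisj⟩ := exists_disjoint_interior_of_hasGenericMultiplicity
    (L := ⊥) (finrank ℝ (EuclideanSpace ℝ (Fin n))) (by simp) (hS.subset (sep_subset _ _))
    (fun j hj => isSolidCone_closure_openTangentCone (hcl j) (hbody j).2.1 (hbody j).2.2 hj.2)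
    ((htile.hasGenericMultiplicity hqD).tangentCone hS (fun j _ => hcl j)
      (fun j _ => (hbody j).2.1) (fun j _ => (hbody j).2.2)) ⟨hiS, hqi⟩
  exact ⟨j, hqj, disjoint_iff_inter_eq_empty.1 hdisj.interior_of_tangentCone⟩

theorem stmt_3 {n : ℕ} {ι : Type*} (K : ι → Set (EuclideanSpace ℝ (Fin n)))
    (D : Set (EuclideanSpace ℝ (Fin n))) (hD : IsConnected D)
    (hbody : ∀ i, IsConvexBody (K i)) (k : ℕ) (hk : 0 < k)
    (htile : IsKFoldTilingOf K D k) :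
    ∀ i, ∀ q ∈ frontier (K i), q ∈ interior D →
      ∃ j, q ∈ frontier (K j) ∧ interior (K i) ∩ interior (K j) = ∅ :=
  stmt_3_general K D hbody k htile
end

section
/- Let {K + x : x ∈ X} be a k-fold translative tiling of ℝⁿ by a convex body K, with 0 ∈ X. Then for every boundary point q of K, the set X_K(q) = {x ∈ X : q ∈ K + x} is finite and has cardinality at least k. -/
open Pointwise
/-- `K` is a `k`-fold translative tile: there is a (locally finite) multiset of translation
vectors, encoded as a family `x : ι → ℝⁿ`, such that every point of `ℝⁿ` not on the boundary
of any translate lies in exactly `k` translates, counted with multiplicity. -/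
def IsKFoldTranslativeTile {n : ℕ} (K : Set (EuclideanSpace ℝ (Fin n))) (k : ℕ) : Prop :=
  ∃ (ι : Type) (x : ι → EuclideanSpace ℝ (Fin n)),
    (∀ B : Set (EuclideanSpace ℝ (Fin n)), Bornology.IsBounded B →
        {i | ((x i +ᵥ K) ∩ B).Nonempty}.Finite) ∧
    ∀ p : EuclideanSpace ℝ (Fin n),
      (∀ i, p ∉ frontier (x i +ᵥ K)) → {i | p ∈ x i +ᵥ K}.encard = k


/-!
Frontiers of convex bodies are Lebesgue-null, so almost every point avoids the frontiers of all
(countably many) translates. Since the translates are closed and locally finite, every point `p`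
close enough to `q` lies only in translates that contain `q`; choosing such a `p` off all
frontiers, the `k` translates containing `p` all contain `q`.
-/

open Filter Topology MeasureTheory

theorem locallyFinite_of_finite_nonempty_inter_isBounded {ι X : Type*} [PseudoMetricSpace X]
    {f : ι → Set X}
    (hf : ∀ B : Set X, Bornology.IsBounded B → {i | (f i ∩ B).Nonempty}.Finite) :
    LocallyFinite f := fun q =>
  ⟨Metric.closedBall q 1, Metric.closedBall_mem_nhds q one_pos,
    hf _ Metric.isBounded_closedBall⟩

theorem exists_of_eventually_nhds_of_ae {X : Type*} [TopologicalSpace X] [MeasurableSpace X]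
    {μ : Measure X} [μ.IsOpenPosMeasure] {P Q : X → Prop} {x : X}
    (hP : ∀ᶠ y in 𝓝 x, P y) (hQ : ∀ᵐ y ∂μ, Q y) : ∃ y, P y ∧ Q y := by
  have hpos : μ {y | P y ∧ Q y} ≠ 0 := by
    rw [Set.ofPred_and, measure_inter_conull hQ]
    exact (Measure.measure_pos_of_mem_nhds μ hP).ne'
  exact nonempty_of_measure_ne_zero hpos

theorem LocallyFinite.ae_forall_notMem_frontier_of_convex {ι E : Type*}
    [NormedAddCommGroup E] [NormedSpace ℝ E] [MeasurableSpace E] [BorelSpace E]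
    [FiniteDimensional ℝ E] (μ : Measure E) [μ.IsAddHaarMeasure] {f : ι → Set E}
    (hf : LocallyFinite f) (hconv : ∀ i, Convex ℝ (f i)) :
    ∀ᵐ p ∂μ, ∀ i, p ∉ frontier (f i) := by
  let J := {i // (f i).Nonempty}
  have : Countable J := Set.countable_univ_iff.mp <|
    (hf.comp_injective Subtype.val_injective).countable_univ fun i => i.2
  have hJ : ∀ᵐ p ∂μ, ∀ i : J, p ∉ frontier (f i) :=
    ae_all_iff.2 fun i => measure_eq_zero_iff_ae_notMem.1 ((hconv i).addHaar_frontier μ)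
  filter_upwards [hJ] with p hp i
  by_cases hi : (f i).Nonempty
  · exact hp ⟨i, hi⟩
  · simp [Set.not_nonempty_iff_eq_empty.1 hi]

theorem stmt_10_general {n : ℕ} (K : Set (EuclideanSpace ℝ (Fin n))) (hK : IsConvexBody K)
    (k : ℕ) {ι : Type} (x : ι → EuclideanSpace ℝ (Fin n))
    (hloc : ∀ B : Set (EuclideanSpace ℝ (Fin n)), Bornology.IsBounded B →
        {i | ((x i +ᵥ K) ∩ B).Nonempty}.Finite)
    (htile : ∀ p : EuclideanSpace ℝ (Fin n),
        (∀ i, p ∉ frontier (x i +ᵥ K)) → {i | p ∈ x i +ᵥ K}.encard = k) :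
    ∀ q ∈ frontier K,
      {i | q ∈ x i +ᵥ K}.Finite ∧ k ≤ {i | q ∈ x i +ᵥ K}.ncard := by
  intro q _
  have hlf : LocallyFinite fun i => x i +ᵥ K :=
    locallyFinite_of_finite_nonempty_inter_isBounded hloc
  have hfin := hlf.point_finite q
  obtain ⟨p, hpq, hp⟩ := exists_of_eventually_nhds_of_ae
    (hlf.eventually_subset (fun i => hK.1.isClosed.vadd (x i)) q)
    (hlf.ae_forall_notMem_frontier_of_convex volume fun i => hK.2.1.vadd (x i))
  refine ⟨hfin, ?_⟩
  have hk : (k : ℕ∞) ≤ {i | q ∈ x i +ᵥ K}.encard := htile p hp ▸ Set.encard_mono hpq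
  rwa [← hfin.cast_ncard_eq, Nat.cast_le] at hk

theorem stmt_10 {n : ℕ} (K : Set (EuclideanSpace ℝ (Fin n))) (hK : IsConvexBody K)
    (k : ℕ) (hk : 0 < k) {ι : Type} (x : ι → EuclideanSpace ℝ (Fin n))
    (hloc : ∀ B : Set (EuclideanSpace ℝ (Fin n)), Bornology.IsBounded B →
        {i | ((x i +ᵥ K) ∩ B).Nonempty}.Finite)
    (htile : ∀ p : EuclideanSpace ℝ (Fin n),
        (∀ i, p ∉ frontier (x i +ᵥ K)) → {i | p ∈ x i +ᵥ K}.encard = k)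
    (i₀ : ι) (hx₀ : x i₀ = 0) :
    ∀ q ∈ frontier K,
      {i | q ∈ x i +ᵥ K}.Finite ∧ k ≤ {i | q ∈ x i +ᵥ K}.ncard :=
  stmt_10_general K hK k x hloc htile
end
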